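/- Let (A, ≤, |·|) be a normed well-quasi-order with proper norm, g a control function, and n ∈ ℕ. Then there is a maximum length among all finite (g,n)-controlled bad sequences over A; that is, the length function L_{A,g}(n) = sup of lengths of (g,n)-controlled bad sequences is finite. -/

import Mathlib

/-!
Kőnig's lemma: the controlled bad sequences form a prefix-closed tree of finite sequences whose
levels are finite, since the `i`-th entry ranges over the finite set `{a | norm a ≤ g^[i] n}`.
An infinite branch would be an infinite bad sequence, which the wqo property rules out, so the
tree has finite depth.
-/

theorem exists_length_bound_of_forall_finite_of_not_exists_branch {A : Type*}
    (P : (m : ℕ) → (Fin m → A) → Prop)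
    (hprefix : ∀ ⦃k m : ℕ⦄ (hkm : k ≤ m) (a : Fin m → A), P m a → P k (a ∘ Fin.castLE hkm))
    (hfin : ∀ m, {a | P m a}.Finite)
    (hbranch : ¬ ∃ f : ℕ → A, ∀ m, P m fun i => f i) :
    ∃ L, ∀ m a, P m a → m ≤ L := by
  by_contra! hunbounded
  let α (m : ℕ) := {a // P m a}
  have (m : ℕ) : Finite (α m) := (hfin m).to_subtype
  have (m : ℕ) : Nonempty (α m) := by
    obtain ⟨k, a, ha, hmk⟩ := hunbounded m
    exact ⟨_, hprefix hmk.le a ha⟩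
  obtain ⟨f, hf⟩ := exists_seq_forall_proj_of_forall_finite (α := α)
    (fun hkm a => ⟨_, hprefix hkm a.1 a.2⟩) (fun _ _ => rfl) (fun _ _ _ _ _ _ => rfl)
    (fun _ _ => Set.toFinite _)
  refine hbranch ⟨fun i => (f (i + 1)).1 (Fin.last i), fun m => ?_⟩
  convert (f m).2 with i
  exact (congrArg (fun a : α (i + 1) => a.1 (Fin.last i)) (hf (Nat.succ_le_of_lt i.2))).symm

section ControlledBadSequence

variable {A : Type*} (le : A → A → Prop) (norm : A → ℕ) (g : ℕ → ℕ) (n : ℕ)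

def IsControlledBad (m : ℕ) (a : Fin m → A) : Prop :=
  (∀ i : Fin m, norm (a i) ≤ g^[(i : ℕ)] n) ∧ ∀ i j : Fin m, i < j → ¬ le (a i) (a j)

variable {le norm g n}

theorem IsControlledBad.castLE {k m : ℕ} (hkm : k ≤ m) {a : Fin m → A}
    (ha : IsControlledBad le norm g n m a) :
    IsControlledBad le norm g n k (a ∘ Fin.castLE hkm) :=
  ⟨fun _ => ha.1 _, fun _ _ hij => ha.2 _ _ hij⟩

theorem finite_setOf_isControlledBad (hproper : ∀ n : ℕ, {a : A | norm a ≤ n}.Finite) (m : ℕ) :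
    {a | IsControlledBad le norm g n m a}.Finite :=
  (Set.Finite.pi fun i : Fin m => hproper (g^[i] n)).subset fun _ ha i _ => ha.1 i

theorem not_exists_seq_forall_isControlledBad
    (hwqo : ∀ f : ℕ → A, ∃ i j : ℕ, i < j ∧ le (f i) (f j)) :
    ¬ ∃ f : ℕ → A, ∀ m, IsControlledBad le norm g n m fun i => f i := fun ⟨f, hbad⟩ => by
  obtain ⟨i, j, hij, hle⟩ := hwqo f
  exact (hbad (j + 1)).2 ⟨i, by omega⟩ ⟨j, by omega⟩ hij hle

end ControlledBadSequence

theorem controlled_bad_sequences_bounded_length_general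
    (A : Type) (le : A → A → Prop) (norm : A → ℕ)
    (hwqo : ∀ f : ℕ → A, ∃ i j : ℕ, i < j ∧ le (f i) (f j))
    (hproper : ∀ n : ℕ, {a : A | norm a ≤ n}.Finite)
    (g : ℕ → ℕ) (n : ℕ) :
    ∃ L : ℕ, ∀ (m : ℕ) (a : Fin m → A),
      (∀ i : Fin m, norm (a i) ≤ g^[(i : ℕ)] n) →
      (∀ i j : Fin m, i < j → ¬ le (a i) (a j)) →
      m ≤ L := by
  obtain ⟨L, hL⟩ := exists_length_bound_of_forall_finite_of_not_exists_branch
    (IsControlledBad le norm g n) (fun _ _ hkm _ ha => ha.castLE hkm)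
    (finite_setOf_isControlledBad hproper)
    (not_exists_seq_forall_isControlledBad hwqo)
  exact ⟨L, fun m a hcontrol hbad => hL m a ⟨hcontrol, hbad⟩⟩

/-- Length theorem (finiteness): in a normed wqo with proper norm, for a control
function g and n ∈ ℕ, there is a maximum length among all finite
(g,n)-controlled bad sequences. -/
theorem controlled_bad_sequences_bounded_length
    (A : Type) (le : A → A → Prop) (norm : A → ℕ)
    (hrefl : ∀ a, le a a)
    (htrans : ∀ a b c, le a b → le b c → le a c)
    (hwqo : ∀ f : ℕ → A, ∃ i j : ℕ, i < j ∧ le (f i) (f j))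
    (hproper : ∀ n : ℕ, {a : A | norm a ≤ n}.Finite)
    (g : ℕ → ℕ) (hmono : Monotone g) (hge : ∀ x, x ≤ g x) (n : ℕ) :
    ∃ L : ℕ, ∀ (m : ℕ) (a : Fin m → A),
      (∀ i : Fin m, norm (a i) ≤ g^[(i : ℕ)] n) →
      (∀ i j : Fin m, i < j → ¬ le (a i) (a j)) →
      m ≤ L :=
  controlled_bad_sequences_bounded_length_general A le norm hwqo hproper g n
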